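/- arXiv:1404.0997 — 3 statements merged into one kernel-verified Lean document; each statement's English description precedes it below -/
import Mathlib

section
/- Let r ≥ 1 and let (s_1, …, s_r) be positive integers with s_1 ≥ 2. Then the Hurwitz multizeta function He^{s_1,…,s_r} : z ↦ Σ_{0 < n_r < ⋯ < n_1} 1/((n_1+z)^{s_1} ⋯ (n_r+z)^{s_r}) is holomorphic (complex differentiable) on the open set Ω = ℂ ∖ {-1, -2, -3, …}. -/
/-- Membership in the domain `Ω = ℂ ∖ {-1, -2, -3, …}`. -/
def InOmega (z : ℂ) : Prop := ∀ k : ℕ, z ≠ -((k : ℂ) + 1)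

/-- The Hurwitz multizeta function `He^{s₁,…,s_r}(z) = ∑_{0 < n_r < ⋯ < n₁} ∏ 1/(n_i+z)^{s_i}`,
indexed by strictly decreasing tuples of positive integers. For `s = []` this is the
constant function `1`. -/
noncomputable def He (s : List ℕ) (z : ℂ) : ℂ :=
  ∑' n : {n : Fin s.length → ℕ // StrictAnti n ∧ ∀ i, 0 < n i},
    ∏ i, 1 / (((n.1 i : ℂ) + z) ^ s.get i)

/-- A composition `s = (s₁, …, s_r)` is admissible if all parts are positive and
the first part (if any) is at least 2. -/
def Admissible (s : List ℕ) : Prop :=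
  (∀ k ∈ s, 1 ≤ k) ∧ ∀ k ∈ s.head?, 2 ≤ k

/-! Near any `z₀ ∈ Ω` there are `ε, c > 0` with `c n ≤ ‖n + w‖` for all `n ≥ 1` and
`‖w - z₀‖ < ε`, so there each term of the series is at most `c^{-(s₁+⋯+s_r)} ∏ nᵢ^{-sᵢ}`.
For a decreasing tuple `n₁` is the largest entry, so `(∏ nᵢ)^{1/r} ≤ n₁` and, as `s₁ ≥ 2`,
`∏ nᵢ^{sᵢ} ≥ n₁ ∏ nᵢ ≥ (∏ nᵢ)^{1+1/r}`. The terms are therefore dominated on the ball by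
`∏ nᵢ^{-(1+1/r)}`, which is summable even over all of `ℕ^r`, and a series of holomorphic
functions dominated by a summable series is holomorphic. -/

open Filter Finset Metric

lemma summable_prod_apply_of_nonneg {α : Type*} {f : α → ℝ} (hf : Summable f) (hf₀ : 0 ≤ f) :
    ∀ r : ℕ, Summable fun m : Fin r → α => ∏ i, f (m i)
  | 0 => Summable.of_finite
  | r + 1 => by
    rw [← (Fin.consEquiv fun _ : Fin (r + 1) => α).summable_iff]
    simpa [Function.comp_def, Fin.prod_univ_succ] using
      hf.mul_of_nonneg (summable_prod_apply_of_nonneg hf hf₀ r) hf₀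
        fun m => prod_nonneg fun i _ => hf₀ (m i)

lemma prod_rpow_one_add_inv_card_le_prod_pow {ι : Type*} [Fintype ι] [DecidableEq ι] (i₀ : ι)
    {x : ι → ℝ} (hx : ∀ i, 1 ≤ x i) (hx₀ : ∀ i, x i ≤ x i₀) {e : ι → ℕ} (he : ∀ i, 1 ≤ e i)
    (he₀ : 2 ≤ e i₀) :
    (∏ i, x i) ^ (1 + (Fintype.card ι : ℝ)⁻¹) ≤ ∏ i, x i ^ e i := by
  have : Nonempty ι := ⟨i₀⟩
  have hx_pos : ∀ i, 0 < x i := fun i => one_pos.trans_le (hx i)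
  have hprod_pos : 0 < ∏ i, x i := prod_pos fun i _ => hx_pos i
  have hroot : (∏ i, x i) ^ (Fintype.card ι : ℝ)⁻¹ ≤ x i₀ := by
    rw [Real.rpow_inv_le_iff_of_pos hprod_pos.le (hx_pos i₀).le
      (Nat.cast_pos.mpr Fintype.card_pos), Real.rpow_natCast, ← card_univ, ← prod_const]
    exact prod_le_prod (fun i _ => (hx_pos i).le) fun i _ => hx₀ i
  calc (∏ i, x i) ^ (1 + (Fintype.card ι : ℝ)⁻¹)
      = (∏ i, x i) * (∏ i, x i) ^ (Fintype.card ι : ℝ)⁻¹ := by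
        rw [Real.rpow_add hprod_pos, Real.rpow_one]
    _ ≤ (∏ i, x i) * x i₀ := by gcongr
    _ = ∏ i, x i ^ (1 + if i = i₀ then 1 else 0) := by
        simp only [pow_add, pow_one, prod_mul_distrib, pow_ite, pow_zero, Fintype.prod_ite_eq']
    _ ≤ ∏ i, x i ^ e i :=
        prod_le_prod (fun i _ => pow_nonneg (hx_pos i).le _) fun i _ =>
          pow_le_pow_right₀ (hx i) (by split_ifs with h <;> [exact h ▸ he₀; exact he i])

lemma InOmega.exists_pos_le_norm_natCast_add {z : ℂ} (hz : InOmega z) :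
    ∃ d > 0, ∀ n : ℕ, 0 < n → d ≤ ‖(n : ℂ) + z‖ := by
  have htendsto : Tendsto (fun k : ℕ => ‖((k + 1 : ℕ) : ℂ) + z‖) cofinite atTop := by
    rw [Nat.cofinite_eq_atTop]
    refine tendsto_atTop_mono (fun k => ?_) (tendsto_atTop_add_const_right _ (-‖z‖)
      (tendsto_natCast_atTop_atTop.comp (tendsto_add_atTop_nat 1)))
    have := norm_sub_norm_le ((k + 1 : ℕ) : ℂ) (-z)
    rw [Complex.norm_natCast, sub_neg_eq_add, norm_neg] at this
    simp only [Function.comp_apply]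
    linarith
  obtain ⟨k₀, hk₀⟩ := htendsto.exists_forall_le
  refine ⟨‖((k₀ + 1 : ℕ) : ℂ) + z‖, norm_pos_iff.mpr fun h => hz k₀ ?_, fun n hn => ?_⟩
  · push_cast at h
    linear_combination h
  · obtain ⟨k, rfl⟩ := Nat.exists_eq_add_of_lt hn
    simpa [add_comm] using hk₀ k

lemma InOmega.exists_ball_mul_le_norm_natCast_add {z : ℂ} (hz : InOmega z) :
    ∃ ε > 0, ∃ c > 0, ∀ w ∈ ball z ε, ∀ n : ℕ, 0 < n → c * n ≤ ‖(n : ℂ) + w‖ := by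
  obtain ⟨d, hd, hd_le⟩ := hz.exists_pos_le_norm_natCast_add
  set R := ‖z‖ + d / 2 with hR
  -- `‖n + w‖` is at least `d / 2` and at least `n - R`; `c` is the weight making both bounds meet.
  refine ⟨d / 2, by positivity, d / 2 / (R + d / 2), by positivity, fun w hw n hn => ?_⟩
  rw [mem_ball, dist_eq_norm] at hw
  have h_near : d / 2 ≤ ‖(n : ℂ) + w‖ := by
    have := norm_sub_le ((n : ℂ) + w) (w - z)
    rw [show (n : ℂ) + w - (w - z) = n + z by ring] at this
    linarith [hd_le n hn]
  have h_far : n - R ≤ ‖(n : ℂ) + w‖ := by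
    have hw_le : ‖w‖ ≤ R := by linarith [norm_le_norm_add_norm_sub' w z]
    have := norm_sub_norm_le (n : ℂ) (-w)
    rw [Complex.norm_natCast, sub_neg_eq_add, norm_neg] at this
    linarith
  rw [div_mul_eq_mul_div, div_le_iff₀ (by positivity)]
  nlinarith [mul_nonneg (by positivity : 0 ≤ R) (sub_nonneg.2 h_near),
    mul_nonneg (by positivity : 0 ≤ d / 2) (sub_nonneg.2 h_far)]

lemma norm_prod_inv_natCast_add_pow_le {r : ℕ} (hr : 0 < r) {e : Fin r → ℕ} (he : ∀ i, 1 ≤ e i)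
    (he₀ : 2 ≤ e ⟨0, hr⟩) {n : Fin r → ℕ} (hn : Antitone n) (hn₀ : ∀ i, 0 < n i) {c : ℝ}
    (hc : 0 < c) {w : ℂ} (hw : ∀ i, c * n i ≤ ‖(n i : ℂ) + w‖) :
    ‖∏ i, 1 / ((n i : ℂ) + w) ^ e i‖ ≤
      (c ^ ∑ i, e i)⁻¹ * ∏ i, ((n i : ℝ) ^ (1 + (r : ℝ)⁻¹))⁻¹ := by
  have hkey := prod_rpow_one_add_inv_card_le_prod_pow (⟨0, hr⟩ : Fin r)
    (fun i => Nat.one_le_cast.mpr (hn₀ i))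
    (fun i => Nat.cast_le.mpr (hn (show (⟨0, hr⟩ : Fin r) ≤ i from Nat.zero_le _))) he he₀
  rw [Fintype.card_fin] at hkey
  rw [prod_inv_distrib, Real.finsetProd_rpow _ _ (fun i _ => Nat.cast_nonneg _), ← mul_inv]
  simp only [one_div, norm_prod, norm_inv, norm_pow, prod_inv_distrib]
  have hprod_pos : 0 < ∏ i, (n i : ℝ) := prod_pos fun i _ => Nat.cast_pos.mpr (hn₀ i)
  refine inv_anti₀ (by positivity) ?_
  calc (c ^ ∑ i, e i) * (∏ i, (n i : ℝ)) ^ (1 + (r : ℝ)⁻¹)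
      ≤ (c ^ ∑ i, e i) * ∏ i, (n i : ℝ) ^ e i := by gcongr
    _ = ∏ i, (c * n i) ^ e i := by simp only [mul_pow, prod_mul_distrib, prod_pow_eq_pow_sum]
    _ ≤ ∏ i, ‖(n i : ℂ) + w‖ ^ e i := by gcongr with i; exact hw i

theorem differentiableOn_tsum_prod_inv_natCast_add_pow {r : ℕ} (hr : 0 < r) {e : Fin r → ℕ}
    (he : ∀ i, 1 ≤ e i) (he₀ : 2 ≤ e ⟨0, hr⟩) :
    DifferentiableOn ℂ (fun z => ∑' n : {n : Fin r → ℕ // StrictAnti n ∧ ∀ i, 0 < n i},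
      ∏ i, 1 / ((n.1 i : ℂ) + z) ^ e i) {z | InOmega z} := by
  intro z hz
  obtain ⟨ε, hε, c, hc, hbound⟩ := InOmega.exists_ball_mul_le_norm_natCast_add hz
  have hsummable : Summable fun n : {n : Fin r → ℕ // StrictAnti n ∧ ∀ i, 0 < n i} =>
      (c ^ ∑ i, e i)⁻¹ * ∏ i, ((n.1 i : ℝ) ^ (1 + (r : ℝ)⁻¹))⁻¹ :=
    ((summable_prod_apply_of_nonneg (Real.summable_nat_rpow_inv.mpr (by simpa using hr))
      (fun _ => by positivity) r).subtype _).mul_left _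
  have hdiff : DifferentiableOn ℂ (fun w => ∑' n : {n : Fin r → ℕ // StrictAnti n ∧ ∀ i, 0 < n i},
      ∏ i, 1 / ((n.1 i : ℂ) + w) ^ e i) (ball z ε) := by
    refine Complex.differentiableOn_tsum_of_summable_norm hsummable (fun n => ?_) isOpen_ball
      fun n w hw => norm_prod_inv_natCast_add_pow_le hr he he₀ n.2.1.antitone n.2.2 hc
        fun i => hbound w hw _ (n.2.2 i)
    refine DifferentiableOn.fun_finsetProd fun i _ => ?_
    refine (differentiableOn_const 1).div (by fun_prop) fun w hw => pow_ne_zero _ ?_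
    have := hbound w hw _ (n.2.2 i)
    have : 0 < c * n.1 i := mul_pos hc (Nat.cast_pos.mpr (n.2.2 i))
    exact norm_pos_iff.mp (by linarith)
  exact (hdiff.differentiableAt (ball_mem_nhds z hε)).differentiableWithinAt

/-- For an admissible composition `s`, the Hurwitz multizeta function
`He s` is holomorphic on `Ω = ℂ ∖ {-1,-2,…}`. -/
theorem hurwitzMultizeta_differentiableOn (s : List ℕ) (hr : s ≠ [])
    (h1 : ∀ k ∈ s, 1 ≤ k) (h2 : 2 ≤ s.head hr) :
    DifferentiableOn ℂ (fun z => He s z) {z : ℂ | InOmega z} :=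
  differentiableOn_tsum_prod_inv_natCast_add_pow (List.length_pos_iff.mpr hr)
    (fun i => h1 _ (s.get_mem i)) (by simpa [List.head_eq_getElem] using h2)
end

section
/- (Fundamental difference equation.) Let r ≥ 1 and let (s_1, …, s_r) be positive integers with s_1 ≥ 2. For every z ∈ ℂ with z ≠ 0 and z ∉ {0, -1, -2, …} (so that both z and z − 1 avoid the poles), one has He^{s_1,…,s_r}(z − 1) − He^{s_1,…,s_r}(z) = z^{-s_r} · He^{s_1,…,s_{r−1}}(z), where for r = 1 the right-hand factor is He^∅ = 1. Equivalently, Δ_-(He^{s_1,…,s_r})(z) = z^{-s_r} He^{s_1,…,s_{r−1}}(z) with Δ_-(f)(z) = f(z−1) − f(z). -/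
/-!
Shifting every index down by one, `He^s(z - 1)` becomes the same series at `z`, but summed over
strictly decreasing tuples of *nonnegative* integers. The tuples whose last entry is positive give
`He^s(z)`; those whose last entry is `0` have the factor `z^{-s_r}` and their remaining entries
range over the index set of `He^{s₁,…,s_{r-1}}(z)`.

Splitting the series this way needs absolute convergence: for `w ∈ Ω` one has `n ≤ C ‖n + w‖`,
and since `n₁` is the largest entry and `s₁ ≥ 2`,
`∏ nᵢ^{sᵢ} ≥ n₁ ∏ nᵢ ≥ (∏ nᵢ)^{1 + 1/r}`, which is summable over all `r`-tuples.
-/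

section Tuples

variable {r : ℕ}

abbrev StrictAntiTuple (r : ℕ) : Type := {m : Fin r → ℕ // StrictAnti m}

abbrev PosStrictAntiTuple (r : ℕ) : Type := {n : Fin r → ℕ // StrictAnti n ∧ ∀ i, 0 < n i}

theorem Fin.strictAnti_snoc_iff {α : Type*} [Preorder α] {m : Fin r → α} {a : α} :
    StrictAnti (Fin.snoc m a : Fin (r + 1) → α) ↔ StrictAnti m ∧ ∀ i, a < m i := by
  refine ⟨fun h => ⟨fun i j hij => ?_, fun i => ?_⟩, fun ⟨hm, ha⟩ i j hij => ?_⟩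
  · simpa using h (Fin.castSucc_lt_castSucc_iff.2 hij)
  · simpa using h (Fin.castSucc_lt_last i)
  · induction j using Fin.lastCases with
    | last =>
      induction i using Fin.lastCases with
      | last => exact absurd hij (lt_irrefl _)
      | cast i => simpa using ha i
    | cast j =>
      induction i using Fin.lastCases with
      | last => exact absurd hij (not_lt.2 (Fin.le_last _))
      | cast i => simpa using hm (Fin.castSucc_lt_castSucc_iff.1 hij)

theorem Antitone.forall_lt_iff_lt_last {α : Type*} [Preorder α] {m : Fin (r + 1) → α}
    (hm : Antitone m) {a : α} : (∀ i, a < m i) ↔ a < m (Fin.last r) :=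
  ⟨fun h => h _, fun h i => h.trans_le (hm (Fin.le_last i))⟩

def StrictAntiTuple.succEquiv (r : ℕ) : StrictAntiTuple r ≃ PosStrictAntiTuple r where
  toFun m := ⟨fun i => m.1 i + 1, fun _ _ h => Nat.succ_lt_succ (m.2 h), fun _ => Nat.succ_pos _⟩
  invFun n := ⟨fun i => n.1 i - 1, fun i j h => by
    show n.1 j - 1 < n.1 i - 1
    have := n.2.1 h; have := n.2.2 j; omega⟩
  left_inv m := by simp
  right_inv n := by ext i; exact Nat.sub_add_cancel (n.2.2 i)

def StrictAntiTuple.lastZeroEquiv (r : ℕ) :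
    {m : Fin (r + 1) → ℕ // StrictAnti m ∧ m (Fin.last r) = 0} ≃ PosStrictAntiTuple r where
  toFun m := ⟨Fin.init m.1, by
    have := m.2.1
    rwa [← Fin.snoc_init_self m.1, m.2.2, Fin.strictAnti_snoc_iff] at this⟩
  invFun n := ⟨Fin.snoc n.1 0, Fin.strictAnti_snoc_iff.2 n.2, Fin.snoc_last _ _⟩
  left_inv m := Subtype.ext <| by simp [← m.2.2]
  right_inv n := Subtype.ext (Fin.init_snoc (α := fun _ => ℕ) 0 n.1)

theorem StrictAntiTuple.tsum_split_last {E : Type*} [NormedAddCommGroup E] [CompleteSpace E]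
    {f : (Fin (r + 1) → ℕ) → E} (hf : Summable fun m : StrictAntiTuple (r + 1) => f m.1) :
    ∑' m : StrictAntiTuple (r + 1), f m.1 =
      ∑' n : PosStrictAntiTuple (r + 1), f n.1 +
        ∑' n : PosStrictAntiTuple r, f (Fin.snoc n.1 0) := by
  rw [← hf.tsum_subtype_add_tsum_subtype_compl {m | 0 < m.1 (Fin.last r)}]
  congr 1
  · let e : {m : StrictAntiTuple (r + 1) // 0 < m.1 (Fin.last r)} ≃ PosStrictAntiTuple (r + 1) :=
      (Equiv.subtypeSubtypeEquivSubtypeInter StrictAnti fun m => 0 < m (Fin.last r)).trans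
        (Equiv.subtypeEquivRight fun _ =>
          and_congr_right fun hm => hm.antitone.forall_lt_iff_lt_last.symm)
    exact e.tsum_eq fun n => f n.1
  · let e : {m : StrictAntiTuple (r + 1) // ¬ 0 < m.1 (Fin.last r)} ≃ PosStrictAntiTuple r :=
      ((Equiv.subtypeSubtypeEquivSubtypeInter StrictAnti fun m => ¬ 0 < m (Fin.last r)).trans
        (Equiv.subtypeEquivRight fun _ => by simp)).trans (StrictAntiTuple.lastZeroEquiv r)
    exact ((e.symm.tsum_eq fun m => f m.1.1).symm :)

end Tuples

open Filter Asymptotics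

section Summability

theorem Summable.fin_prod_of_nonneg {ι : Type*} {f : ι → ℝ} (hf : Summable f) (hf0 : 0 ≤ f)
    (r : ℕ) : Summable fun n : Fin r → ι => ∏ i, f (n i) := by
  induction r with
  | zero => exact Summable.of_finite
  | succ r ih =>
    refine ((Fin.consEquiv fun _ => ι).symm.summable_iff.2
      (hf.mul_of_nonneg ih hf0 fun _ => Finset.prod_nonneg fun _ _ => hf0 _)).congr fun n => ?_
    simp [Fin.prod_univ_succ, Fin.tail]

theorem prod_rpow_le_prod_pow {r : ℕ} {σ : Fin (r + 1) → ℕ} (hσ : ∀ i, 1 ≤ σ i) (hσ0 : 2 ≤ σ 0)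
    {x : Fin (r + 1) → ℝ} (hx : ∀ i, 1 ≤ x i) (hx_anti : Antitone x) :
    (∏ i, x i) ^ (1 + ((r : ℝ) + 1)⁻¹) ≤ ∏ i, x i ^ σ i := by
  have hx0 : ∀ i, 0 ≤ x i := fun i => zero_le_one.trans (hx i)
  have hprod : 0 < ∏ i, x i := Finset.prod_pos fun i _ => zero_lt_one.trans_le (hx i)
  have hmax : (∏ i, x i) ^ ((r : ℝ) + 1)⁻¹ ≤ x 0 := by
    rw [Real.rpow_inv_le_iff_of_pos hprod.le (hx0 0) (by positivity)]
    calc ∏ i, x i ≤ ∏ _i : Fin (r + 1), x 0 :=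
          Finset.prod_le_prod (fun i _ => hx0 i) fun i _ => hx_anti (Fin.zero_le i)
      _ = x 0 ^ ((r : ℝ) + 1) := by simp [← Real.rpow_natCast]
  calc (∏ i, x i) ^ (1 + ((r : ℝ) + 1)⁻¹) = (∏ i, x i) ^ ((r : ℝ) + 1)⁻¹ * ∏ i, x i := by
        rw [Real.rpow_add hprod, Real.rpow_one, mul_comm]
    _ ≤ x 0 * ∏ i, x i := by gcongr
    _ = x 0 ^ 2 * ∏ i : Fin r, x i.succ := by rw [Fin.prod_univ_succ, ← mul_assoc, sq]
    _ ≤ ∏ i, x i ^ σ i := by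
        rw [Fin.prod_univ_succ]
        refine mul_le_mul (pow_le_pow_right₀ (hx 0) hσ0) ?_
          (Finset.prod_nonneg fun i _ => hx0 _) (pow_nonneg (hx0 0) _)
        exact Finset.prod_le_prod (fun i _ => hx0 _)
          fun i _ => le_self_pow₀ (hx _) (Nat.one_le_iff_ne_zero.1 (hσ _))

theorem summable_prod_natCast_pow_inv {r : ℕ} {σ : Fin (r + 1) → ℕ} (hσ : ∀ i, 1 ≤ σ i)
    (hσ0 : 2 ≤ σ 0) :
    Summable fun n : PosStrictAntiTuple (r + 1) => ∏ i, ((n.1 i : ℝ) ^ σ i)⁻¹ := by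
  set p : ℝ := 1 + ((r : ℝ) + 1)⁻¹
  have hp : 1 < p := by simp only [p]; linarith [show (0 : ℝ) < ((r : ℝ) + 1)⁻¹ by positivity]
  have hdom : Summable fun n : Fin (r + 1) → ℕ => ∏ i, ((n i : ℝ) ^ p)⁻¹ :=
    (Real.summable_nat_rpow_inv.2 hp).fin_prod_of_nonneg (fun _ => by positivity) _
  refine (hdom.comp_injective Subtype.val_injective).of_nonneg_of_le
    (fun _ => Finset.prod_nonneg fun _ _ => by positivity) fun n => ?_
  have hn : ∀ i, (1 : ℝ) ≤ n.1 i := fun i => Nat.one_le_cast.2 (n.2.2 i)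
  rw [Function.comp_apply, Finset.prod_inv_distrib, Finset.prod_inv_distrib,
    Real.finsetProd_rpow _ _ fun i _ => zero_le_one.trans (hn i)]
  have hprod : 0 < ∏ i, (n.1 i : ℝ) := Finset.prod_pos fun i _ => zero_lt_one.trans_le (hn i)
  exact inv_anti₀ (Real.rpow_pos_of_pos hprod _)
    (prod_rpow_le_prod_pow hσ hσ0 hn fun i j h => Nat.cast_le.2 (n.2.1.antitone h))

end Summability

theorem InOmega.exists_natCast_le_mul_norm {w : ℂ} (hw : InOmega w) :
    ∃ C : ℝ, ∀ n : ℕ, (n : ℝ) ≤ C * ‖(n : ℂ) + w‖ := by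
  have hzero : ∀ n : ℕ, (n : ℂ) + w = 0 → (n : ℂ) = 0 := by
    rintro (_ | k) h
    · simp
    · exact absurd (by push_cast at h ⊢; linear_combination h) (hw k)
  have hO : (fun n : ℕ => (n : ℂ)) =O[cofinite] fun n => (n : ℂ) + w := by
    rw [Nat.cofinite_eq_atTop]
    exact isBigO_of_div_tendsto_nhds (.of_forall hzero) 1 (tendsto_natCast_div_add_atTop w)
  simpa using (isBigO_cofinite_iff hzero).1 hO

theorem norm_one_div_natCast_add_pow_le {w : ℂ} {C : ℝ}
    (hC : ∀ n : ℕ, (n : ℝ) ≤ C * ‖(n : ℂ) + w‖) {n : ℕ} (hn : 0 < n) (k : ℕ) :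
    ‖1 / ((n : ℂ) + w) ^ k‖ ≤ C ^ k * ((n : ℝ) ^ k)⁻¹ := by
  have hn' : (0 : ℝ) < n := Nat.cast_pos.2 hn
  have hnorm : 0 < ‖(n : ℂ) + w‖ := by
    by_contra! h
    have := hC n
    rw [le_antisymm h (norm_nonneg _), mul_zero] at this
    linarith
  rw [norm_div, norm_one, norm_pow, one_div, ← div_eq_mul_inv, le_div_iff₀ (by positivity),
    inv_mul_le_iff₀ (by positivity), ← mul_pow, mul_comm]
  exact pow_le_pow_left₀ hn'.le (hC n) k

section HurwitzMultizeta

variable {r : ℕ}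

noncomputable def hurwitzMultizetaTerm (σ : Fin r → ℕ) (w : ℂ) (n : Fin r → ℕ) : ℂ :=
  ∏ i, 1 / ((n i : ℂ) + w) ^ σ i

/-- `He` with the exponents indexed by `Fin r` instead of a list, so that the depth `r` can be
rewritten freely. -/
noncomputable def hurwitzMultizeta (σ : Fin r → ℕ) (w : ℂ) : ℂ :=
  ∑' n : PosStrictAntiTuple r, hurwitzMultizetaTerm σ w n.1

theorem He_eq_hurwitzMultizeta (s : List ℕ) (hs : s.length = r) (w : ℂ) :
    He s w = hurwitzMultizeta (fun i : Fin r => s[i]) w := by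
  subst hs; rfl

theorem summable_hurwitzMultizetaTerm {σ : Fin (r + 1) → ℕ} (hσ : ∀ i, 1 ≤ σ i) (hσ0 : 2 ≤ σ 0)
    {w : ℂ} (hw : InOmega w) :
    Summable fun n : PosStrictAntiTuple (r + 1) => hurwitzMultizetaTerm σ w n.1 := by
  obtain ⟨C, hC⟩ := hw.exists_natCast_le_mul_norm
  refine Summable.of_norm_bounded
    ((summable_prod_natCast_pow_inv hσ hσ0).mul_left (C ^ ∑ i, σ i)) fun n => ?_
  rw [hurwitzMultizetaTerm, norm_prod, ← Finset.prod_pow_eq_pow_sum, ← Finset.prod_mul_distrib]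
  exact Finset.prod_le_prod (fun _ _ => norm_nonneg _)
    fun i _ => norm_one_div_natCast_add_pow_le hC (n.2.2 i) _

theorem hurwitzMultizetaTerm_succEquiv (σ : Fin r → ℕ) (z : ℂ) (m : StrictAntiTuple r) :
    hurwitzMultizetaTerm σ (z - 1) (StrictAntiTuple.succEquiv r m).1 =
      hurwitzMultizetaTerm σ z m.1 := by
  refine Finset.prod_congr rfl fun i _ => ?_
  simp only [StrictAntiTuple.succEquiv, Equiv.coe_fn_mk]
  push_cast
  ring

theorem hurwitzMultizeta_sub_one (σ : Fin r → ℕ) (z : ℂ) :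
    hurwitzMultizeta σ (z - 1) = ∑' m : StrictAntiTuple r, hurwitzMultizetaTerm σ z m.1 := by
  rw [hurwitzMultizeta, ← (StrictAntiTuple.succEquiv r).tsum_eq]
  exact tsum_congr (hurwitzMultizetaTerm_succEquiv σ z)

theorem hurwitzMultizetaTerm_snoc_zero (σ : Fin (r + 1) → ℕ) (z : ℂ) (n : Fin r → ℕ) :
    hurwitzMultizetaTerm σ z (Fin.snoc n 0) =
      1 / z ^ σ (Fin.last r) * hurwitzMultizetaTerm (fun i => σ i.castSucc) z n := by
  simp [hurwitzMultizetaTerm, Fin.prod_univ_castSucc, mul_comm]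

theorem hurwitzMultizeta_sub_one_sub {σ : Fin (r + 1) → ℕ} (hσ : ∀ i, 1 ≤ σ i) (hσ0 : 2 ≤ σ 0)
    {z : ℂ} (hz : InOmega (z - 1)) :
    hurwitzMultizeta σ (z - 1) - hurwitzMultizeta σ z =
      1 / z ^ σ (Fin.last r) * hurwitzMultizeta (fun i => σ i.castSucc) z := by
  have hsum : Summable fun m : StrictAntiTuple (r + 1) => hurwitzMultizetaTerm σ z m.1 :=
    ((StrictAntiTuple.succEquiv _).summable_iff.2 (summable_hurwitzMultizetaTerm hσ hσ0 hz)).congr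
      (hurwitzMultizetaTerm_succEquiv σ z)
  rw [hurwitzMultizeta_sub_one, StrictAntiTuple.tsum_split_last hsum, hurwitzMultizeta,
    hurwitzMultizeta]
  simp only [hurwitzMultizetaTerm_snoc_zero, tsum_mul_left, add_sub_cancel_left]

end HurwitzMultizeta

/-- the fundamental difference equation
`He^{s₁,…,s_r}(z-1) - He^{s₁,…,s_r}(z) = z^{-s_r} · He^{s₁,…,s_{r-1}}(z)`,
valid for all `z` with `z ∉ {0, -1, -2, …}`. -/
theorem hurwitzMultizeta_difference_equation (s : List ℕ) (hr : s ≠ [])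
    (h1 : ∀ k ∈ s, 1 ≤ k) (h2 : 2 ≤ s.head hr)
    (z : ℂ) (hz : ∀ k : ℕ, z ≠ -(k : ℂ)) :
    He s (z - 1) - He s z = (1 / z ^ s.getLast hr) * He s.dropLast z := by
  obtain ⟨r, hs⟩ : ∃ r, s.length = r + 1 := Nat.exists_eq_add_one.2 (List.length_pos_iff.2 hr)
  have hlen : s.dropLast.length = r := by simp [hs]
  have hz' : InOmega (z - 1) := fun k h => hz k (by linear_combination h)
  rw [He_eq_hurwitzMultizeta s hs, He_eq_hurwitzMultizeta s hs, He_eq_hurwitzMultizeta _ hlen,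
    hurwitzMultizeta_sub_one_sub (σ := fun i : Fin (r + 1) => s[i])
      (fun i => h1 _ (List.getElem_mem _)) (by simpa [List.head_eq_getElem] using h2) hz']
  simp [List.getLast_eq_getElem, hs]
end

section
/- Let F be a rational function with complex coefficients, let f : ℂ → ℂ be a 1-periodic function (f(z − 1) = f(z) for all z), and let λ_1, …, λ_n ∈ ℂ. Suppose that F(z) + Σ_{i=1}^{n} λ_i He^{i}(z) = f(z) holds for all z ∈ ℂ outside the negative integers and outside the poles of F. Then λ_1 = ⋯ = λ_n = 0, and F and f are constant functions. -/
/-- The regularized Hurwitz zeta function `He¹(z) = ∑_{n>0} (1/(n+z) - 1/n)`. -/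
noncomputable def HeOne (z : ℂ) : ℂ :=
  ∑' n : ℕ, (1 / ((n : ℂ) + 1 + z) - 1 / ((n : ℂ) + 1))

/-- `He^i` for `i ≥ 1`: the regularized series for `i = 1`, the Hurwitz zeta
function `∑_{n>0} 1/(n+z)^i` for `i ≥ 2`. -/
noncomputable def Hei (i : ℕ) (z : ℂ) : ℂ := if i = 1 then HeOne z else He [i] z

open Filter Asymptotics Polynomial

lemma isBigO_inv_natCast_add (w : ℂ) :
    (fun n : ℕ ↦ ((n : ℂ) + w)⁻¹) =O[atTop] fun n ↦ (n : ℝ)⁻¹ := by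
  have hratio : (fun n : ℕ ↦ (n : ℂ) / (n + w)) =O[atTop] fun _ ↦ (1 : ℝ) :=
    (tendsto_natCast_div_add_atTop w).isBigO_one ℝ
  have hinv : (fun n : ℕ ↦ (n : ℂ)⁻¹) =O[atTop] fun n ↦ (n : ℝ)⁻¹ :=
    IsBigO.of_norm_left (by simp [isBigO_refl])
  refine ((hratio.mul hinv).congr' ?_ (by simp)).trans (isBigO_refl _ _)
  filter_upwards [eventually_ne_atTop 0] with n hn
  field_simp

lemma summable_one_div_natCast_add_pow (w : ℂ) {i : ℕ} (hi : 2 ≤ i) :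
    Summable fun n : ℕ ↦ 1 / ((n : ℂ) + w) ^ i := by
  refine summable_of_isBigO_nat (Real.summable_nat_pow_inv.mpr hi) ?_
  simpa [inv_pow] using (isBigO_inv_natCast_add w).pow i

lemma eventually_natCast_add_ne_zero (w : ℂ) : ∀ᶠ n : ℕ in atTop, (n : ℂ) + w ≠ 0 := by
  filter_upwards [eventually_gt_atTop ⌊‖w‖⌋₊] with n hn hw
  have : ‖w‖ = n := by simp [eq_neg_of_add_eq_zero_right hw]
  exact (Nat.lt_of_floor_lt hn).ne this

lemma summable_one_div_natCast_add_sub_one_div_natCast_add (a b : ℂ) :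
    Summable fun n : ℕ ↦ 1 / ((n : ℂ) + a) - 1 / ((n : ℂ) + b) := by
  refine summable_of_isBigO_nat (Real.summable_nat_pow_inv.mpr one_lt_two) ?_
  have hprod :=
    ((isBigO_inv_natCast_add a).mul (isBigO_inv_natCast_add b)).const_mul_left (b - a)
  refine (hprod.congr' ?_ (by simp [sq])).trans (isBigO_refl _ _)
  filter_upwards [eventually_natCast_add_ne_zero a, eventually_natCast_add_ne_zero b]
    with n ha hb
  field_simp
  ring

lemma He_singleton (i : ℕ) (z : ℂ) : He [i] z = ∑' n : ℕ, 1 / ((n : ℂ) + 1 + z) ^ i := by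
  let e : ℕ ≃ {n : Fin 1 → ℕ // StrictAnti n ∧ ∀ j, 0 < n j} :=
    { toFun m := ⟨fun _ ↦ m + 1, Subsingleton.strictAnti _, fun _ ↦ m.succ_pos⟩
      invFun n := n.1 0 - 1
      left_inv m := by simp
      right_inv n := by
        ext j
        rw [Subsingleton.elim j 0]
        simp [Nat.sub_add_cancel (n.2.2 0)] }
  show ∑' n : {n : Fin 1 → ℕ // StrictAnti n ∧ ∀ j, 0 < n j},
    ∏ j, 1 / ((n.1 j : ℂ) + z) ^ [i].get j = _
  rw [← e.tsum_eq]
  simp [e, add_assoc]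

lemma He_singleton_sub_one {i : ℕ} (hi : 2 ≤ i) (z : ℂ) :
    He [i] (z - 1) = He [i] z + 1 / z ^ i := by
  have hshift : ∀ n : ℕ, (n : ℂ) + 1 + (z - 1) = n + z := fun n ↦ by ring
  simp only [He_singleton, hshift, (summable_one_div_natCast_add_pow z hi).tsum_eq_zero_add]
  simp [add_comm]

lemma HeOne_sub_one (z : ℂ) : HeOne (z - 1) = HeOne z + 1 / z := by
  set g : ℕ → ℂ := fun n ↦ 1 / ((n : ℂ) + z)
  have htel : HasSum (fun n ↦ g n - g (n + 1)) (1 / z) := by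
    have hsum : Summable fun n ↦ g n - g (n + 1) := by
      simpa only [g, Nat.cast_add, Nat.cast_one, add_assoc] using
        summable_one_div_natCast_add_sub_one_div_natCast_add z (1 + z)
    have hg : Tendsto g atTop (nhds 0) := by
      simpa [g] using (isBigO_inv_natCast_add z).trans_tendsto tendsto_inv_atTop_nhds_zero_nat
    rw [hsum.hasSum_iff_tendsto_nat]
    simp_rw [Finset.sum_range_sub']
    simpa [g] using tendsto_const_nhds.sub hg
  have hHeOne : HasSum (fun n ↦ g (n + 1) - 1 / ((n : ℂ) + 1)) (HeOne z) := by
    simpa only [g, HeOne, Nat.cast_add, Nat.cast_one, add_assoc] using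
      (summable_one_div_natCast_add_sub_one_div_natCast_add (1 + z) 1).hasSum
  rw [add_comm, ← (htel.add hHeOne).tsum_eq, HeOne]
  congr 1 with n
  simp only [g]
  ring_nf

lemma Hei_sub_one {i : ℕ} (hi : 1 ≤ i) (z : ℂ) : Hei i (z - 1) = Hei i z + 1 / z ^ i := by
  rcases hi.eq_or_lt with rfl | hi
  · simpa [Hei] using HeOne_sub_one z
  · simp only [Hei, if_neg hi.ne', He_singleton_sub_one hi]

lemma inOmega_of_neg_one_lt_re {z : ℂ} (hz : -1 < z.re) : InOmega z := fun k hk ↦ by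
  simp only [hk, Complex.neg_re, Complex.add_re, Complex.natCast_re, Complex.one_re] at hz
  linarith [k.cast_nonneg (α := ℝ)]

lemma IsCoprime.eval_ne_zero_of_isRoot {R : Type*} [CommRing R] [Nontrivial R] {p q : R[X]}
    (h : IsCoprime p q) {a : R} (hq : q.IsRoot a) : p.eval a ≠ 0 := fun hp ↦ by
  obtain ⟨u, v, huv⟩ := h
  simpa [hp, hq.eq_zero] using congrArg (Polynomial.eval a) huv

namespace Polynomial

section CharZero

variable {R : Type*} [CommRing R] [IsDomain R] [CharZero R] {p : R[X]}

lemma eventually_eval_natCast_ne_zero (hp : p ≠ 0) :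
    ∀ᶠ n : ℕ in atTop, p.eval (n : R) ≠ 0 := by
  rw [← Nat.cofinite_eq_atTop, eventually_cofinite]
  simpa using (finite_setOfPred_isRoot hp).preimage Nat.cast_injective.injOn

lemma eventually_eval_natCast_sub_one_ne_zero (hp : p ≠ 0) :
    ∀ᶠ n : ℕ in atTop, p.eval ((n : R) - 1) ≠ 0 := by
  have hp' : p.comp (X + C (-1)) ≠ 0 := comp_X_add_C_ne_zero_iff.mpr hp
  simpa [sub_eq_add_neg] using eventually_eval_natCast_ne_zero hp'

lemma eq_zero_of_eventually_eval_natCast_eq_zero (h : ∀ᶠ n : ℕ in atTop, p.eval (n : R) = 0) :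
    p = 0 := by
  by_contra hp
  obtain ⟨n, hn, hn'⟩ := (h.and (eventually_eval_natCast_ne_zero hp)).exists
  exact hn' hn

lemma eq_C_of_comp_X_sub_one_eq (h : p.comp (X - 1) = p) : p = C (p.eval 0) := by
  have hnat (n : ℕ) : p.eval (n : R) = p.eval 0 := by
    induction n with
    | zero => simp
    | succ n ih =>
      conv_lhs => rw [← h]
      simpa [eval_comp] using ih
  rw [← sub_eq_zero]
  exact eq_zero_of_eventually_eval_natCast_eq_zero (.of_forall fun n ↦ by simp [hnat])

end CharZero

variable {R : Type*} [CommRing R] {n : ℕ}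

/-- `X ^ n * ∑ i, lam i / X ^ (i + 1)`. -/
noncomputable def invPowSumNumerator (lam : Fin n → R) : R[X] :=
  ∑ i : Fin n, C (lam i) * X ^ (n - 1 - i)

/-- The numerator of `(p / q)(X - 1) - (p / q)(X) + ∑ i, lam i / X ^ (i + 1)`. -/
noncomputable def shiftDiffNumerator (p q : R[X]) (lam : Fin n → R) : R[X] :=
  (p.comp (X - 1) * q - p * q.comp (X - 1)) * X ^ n +
    invPowSumNumerator lam * (q * q.comp (X - 1))

lemma coeff_mul_X_pow_add_invPowSumNumerator (A : R[X]) (lam : Fin n → R) (i : Fin n) :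
    (A * X ^ n + invPowSumNumerator lam).coeff (n - 1 - i) = lam i := by
  rw [coeff_add, coeff_mul_X_pow', if_neg (by omega), zero_add, invPowSumNumerator,
    finsetSum_coeff, Finset.sum_eq_single i]
  · simp
  · intro j _ hji
    rw [coeff_C_mul_X_pow, if_neg fun h ↦ hji (Fin.ext (by omega))]
  · simp

lemma shiftDiffNumerator_one (p : R[X]) (lam : Fin n → R) :
    shiftDiffNumerator p 1 lam = (p.comp (X - 1) - p) * X ^ n + invPowSumNumerator lam := by
  simp [shiftDiffNumerator]

lemma eval_shiftDiffNumerator {K : Type*} [Field K] (p q : K[X]) (lam : Fin n → K) {z : K}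
    (hz : z ≠ 0) (hq : q.eval z ≠ 0) (hq' : q.eval (z - 1) ≠ 0) :
    (shiftDiffNumerator p q lam).eval z = z ^ n * q.eval z * q.eval (z - 1) *
      (p.eval (z - 1) / q.eval (z - 1) - p.eval z / q.eval z + ∑ i, lam i / z ^ (i.1 + 1)) := by
  have hpow (i : Fin n) : z ^ (n - 1 - i) = z ^ n / z ^ (i.1 + 1) := by
    rw [eq_div_iff (pow_ne_zero _ hz), ← pow_add]
    congr 1
    omega
  simp only [shiftDiffNumerator, invPowSumNumerator, eval_add, eval_mul, eval_sub, eval_comp,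
    eval_X, eval_one, eval_pow, eval_finsetSum, eval_C, hpow, mul_div_left_comm _ (z ^ n),
    ← Finset.mul_sum]
  field_simp

lemma exists_isRoot_extremal_re {q : ℂ[X]} (hq : q ≠ 0) {z : ℂ} (hz : q.IsRoot z) :
    ∃ α β, q.IsRoot α ∧ q.IsRoot β ∧
      ∀ w, q.IsRoot w → β.re ≤ w.re ∧ w.re ≤ α.re := by
  have hmem (w : ℂ) : w ∈ q.roots.toFinset ↔ q.IsRoot w := by simp [hq]
  have hne : q.roots.toFinset.Nonempty := ⟨z, (hmem z).2 hz⟩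
  obtain ⟨α, hα, hαmax⟩ := q.roots.toFinset.exists_max_image Complex.re hne
  obtain ⟨β, hβ, hβmin⟩ := q.roots.toFinset.exists_min_image Complex.re hne
  exact ⟨α, β, (hmem α).1 hα, (hmem β).1 hβ,
    fun w hw ↦ ⟨hβmin w ((hmem w).2 hw), hαmax w ((hmem w).2 hw)⟩⟩

lemma denom_eq_one_of_shiftDiffNumerator_eq_zero {p q : ℂ[X]} {lam : Fin n → ℂ}
    (hpq : IsCoprime p q) (hq : q.Monic) (hD : shiftDiffNumerator p q lam = 0) : q = 1 := by
  by_contra hq1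
  have hdeg : q.degree ≠ 0 := fun h ↦
    hq1 (hq.natDegree_eq_zero.mp (natDegree_eq_zero_iff_degree_le_zero.mpr h.le))
  obtain ⟨z, hz⟩ := IsAlgClosed.exists_root q hdeg
  obtain ⟨α, β, hα, hβ, hext⟩ := exists_isRoot_extremal_re hq.ne_zero hz
  have hα1 : q.eval (α + 1) ≠ 0 := fun h ↦ absurd (hext _ h).2 (by simp)
  have hβ1 : q.eval (β - 1) ≠ 0 := fun h ↦ absurd (hext _ h).1 (by simp)
  have hDα := congrArg (eval (α + 1)) hD
  have hDβ := congrArg (eval β) hD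
  simp [shiftDiffNumerator, eval_comp, hα.eq_zero, hβ.eq_zero, hα1, hβ1,
    hpq.eval_ne_zero_of_isRoot hα, hpq.eval_ne_zero_of_isRoot hβ] at hDα hDβ
  obtain ⟨hα0, -⟩ := hDα
  obtain ⟨hβ0, -⟩ := hDβ
  have := (hext α hα).1
  rw [eq_neg_of_add_eq_zero_left hα0, hβ0] at this
  norm_num at this

end Polynomial

lemma RatFunc.eq_C_of_eventually_eval_sub_one_add_eq {n : ℕ} (F : RatFunc ℂ)
    (lam : Fin n → ℂ)
    (h : ∀ᶠ m : ℕ in atTop,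
      F.eval (RingHom.id ℂ) ((m : ℂ) - 1) + ∑ i, lam i / (m : ℂ) ^ (i.1 + 1) =
        F.eval (RingHom.id ℂ) m) :
    (∀ i, lam i = 0) ∧ ∃ c, F = RatFunc.C c := by
  have hFeval (z : ℂ) : F.eval (RingHom.id ℂ) z = F.num.eval z / F.denom.eval z := by
    simp [RatFunc.eval]
  have hD : shiftDiffNumerator F.num F.denom lam = 0 := by
    refine eq_zero_of_eventually_eval_natCast_eq_zero ?_
    filter_upwards [h, eventually_ne_atTop 0, eventually_eval_natCast_ne_zero F.denom_ne_zero,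
      eventually_eval_natCast_sub_one_ne_zero F.denom_ne_zero] with m hm hm0 hq hq'
    rw [eval_shiftDiffNumerator _ _ _ (Nat.cast_ne_zero.mpr hm0) hq hq']
    rw [hFeval, hFeval] at hm
    linear_combination ((m : ℂ) ^ n * F.denom.eval (m : ℂ) * F.denom.eval ((m : ℂ) - 1)) * hm
  have hq := denom_eq_one_of_shiftDiffNumerator_eq_zero F.isCoprime_num_denom F.monic_denom hD
  rw [hq, shiftDiffNumerator_one] at hD
  have hlam (i : Fin n) : lam i = 0 := by
    rw [← coeff_mul_X_pow_add_invPowSumNumerator (F.num.comp (Polynomial.X - 1) - F.num) lam i,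
      hD, coeff_zero]
  have hper : F.num.comp (Polynomial.X - 1) = F.num := by
    simpa [invPowSumNumerator, hlam, sub_eq_zero] using hD
  refine ⟨hlam, F.num.eval 0, ?_⟩
  rw [← F.num_div_denom, hq, eq_C_of_comp_X_sub_one_eq hper]
  simp [RatFunc.algebraMap_C]

lemma eventually_eval_sub_one_add_sum_eq {F : RatFunc ℂ} {f : ℂ → ℂ}
    (hf : ∀ z, f (z - 1) = f z) {n : ℕ} {lam : Fin n → ℂ}
    (h : ∀ z : ℂ, InOmega z → Polynomial.eval z F.denom ≠ 0 →
      F.eval (RingHom.id ℂ) z + ∑ i : Fin n, lam i * Hei (i.1 + 1) z = f z) :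
    ∀ᶠ m : ℕ in atTop,
      F.eval (RingHom.id ℂ) ((m : ℂ) - 1) + ∑ i, lam i / (m : ℂ) ^ (i.1 + 1) =
        F.eval (RingHom.id ℂ) m := by
  filter_upwards [eventually_ge_atTop 1, eventually_eval_natCast_ne_zero F.denom_ne_zero,
    eventually_eval_natCast_sub_one_ne_zero F.denom_ne_zero] with m hm hq hq'
  have hm' : (1 : ℝ) ≤ m := by exact_mod_cast hm
  have hΩ : InOmega (m : ℂ) := inOmega_of_neg_one_lt_re (by simp; linarith)
  have hΩ' : InOmega ((m : ℂ) - 1) := inOmega_of_neg_one_lt_re (by simp; linarith)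
  have e := h _ hΩ' hq'
  rw [hf, ← h _ hΩ hq] at e
  simp only [Hei_sub_one (Nat.le_add_left 1 _), mul_add, Finset.sum_add_distrib, mul_one_div]
    at e
  linear_combination e

/-- if a rational function `F` plus a linear combination
`∑ λᵢ He^i` (`1 ≤ i ≤ n`) equals a 1-periodic function `f` away from the
negative integers and the poles of `F`, then all `λᵢ` vanish and both `F` and
`f` are constant. -/
theorem rational_plus_hurwitz_combination_periodic
    (F : RatFunc ℂ) (f : ℂ → ℂ) (hf : ∀ z : ℂ, f (z - 1) = f z)
    (n : ℕ) (lam : Fin n → ℂ)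
    (h : ∀ z : ℂ, InOmega z → Polynomial.eval z F.denom ≠ 0 →
      F.eval (RingHom.id ℂ) z + ∑ i : Fin n, lam i * Hei (i.1 + 1) z = f z) :
    (∀ i, lam i = 0) ∧ (∃ c : ℂ, F = RatFunc.C c) ∧ (∃ c : ℂ, ∀ z : ℂ, f z = c) := by
  obtain ⟨hlam, c, hF⟩ :=
    RatFunc.eq_C_of_eventually_eval_sub_one_add_eq F lam (eventually_eval_sub_one_add_sum_eq hf h)
  have hfΩ (z : ℂ) (hz : InOmega z) : f z = c := by
    simpa [hF, hlam] using (h z hz (by simp [hF])).symm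
  have hper : Function.Periodic f 1 := fun z ↦ by simpa using (hf (z + 1)).symm
  refine ⟨hlam, ⟨c, hF⟩, c, fun z ↦ ?_⟩
  by_cases hz : InOmega z
  · exact hfΩ z hz
  · obtain ⟨k, rfl⟩ : ∃ k : ℕ, z = -((k : ℂ) + 1) := by simpa [InOmega] using hz
    rw [← hper.nat_mul (k + 1), hfΩ _ (inOmega_of_neg_one_lt_re (by simp))]
end
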